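/- A Zinbiel algebra E factorizes through Zinbiel subalgebras Z and W (i.e., Z and W are subalgebras of E with E = Z ⊕ W as vector spaces) if and only if there exists a matched pair structure (Z, W, ◁, ▷, ↼, ⇀) such that E is isomorphic to the bicrossed product Z ⋈ W via the map (x,u) ↦ x + u. -/
import Mathlib


/-- The bicrossed product multiplication on `Z ⊕ W`. -/
def bMul {k Z W : Type*} [CommRing k] [AddCommGroup Z] [Module k Z]
    [AddCommGroup W] [Module k W]
    (m : Z →ₗ[k] Z →ₗ[k] Z) (mW : W →ₗ[k] W →ₗ[k] W)
    (tr : Z →ₗ[k] W →ₗ[k] W) (tl : W →ₗ[k] Z →ₗ[k] W)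
    (pl : Z →ₗ[k] W →ₗ[k] Z) (pr : W →ₗ[k] Z →ₗ[k] Z)
    (a b : Z × W) : Z × W :=
  (m a.1 b.1 + pl a.1 b.2 + pr a.2 b.1,
   tr a.1 b.2 + tl a.2 b.1 + mW a.2 b.2)

/-- A Zinbiel algebra `E` factorizes through subalgebras `Z` and `W`
(i.e. `E = Z ⊕ W` as vector spaces) iff there is a matched pair structure
making `E` isomorphic, via `(x,u) ↦ x + u`, to the bicrossed product `Z ⋈ W`. -/
theorem stmt8 {k E : Type*} [Field k] [CharZero k]
    [AddCommGroup E] [Module k E]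
    (mE : E →ₗ[k] E →ₗ[k] E)
    (hE : ∀ x y z : E, mE (mE x y) z = mE x (mE y z + mE z y))
    (Z W : Submodule k E)
    (mZ : Z →ₗ[k] Z →ₗ[k] Z) (hmZ : ∀ x y : Z, (mZ x y : E) = mE x y)
    (mW : W →ₗ[k] W →ₗ[k] W) (hmW : ∀ u v : W, (mW u v : E) = mE u v) :
    IsCompl Z W ↔
    ∃ (tr : Z →ₗ[k] W →ₗ[k] W) (tl : W →ₗ[k] Z →ₗ[k] W)
      (pl : Z →ₗ[k] W →ₗ[k] Z) (pr : W →ₗ[k] Z →ₗ[k] Z),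
      -- the bicrossed product is a Zinbiel algebra (matched pair conditions)
      (∀ a b c : Z × W,
        bMul mZ mW tr tl pl pr (bMul mZ mW tr tl pl pr a b) c =
          bMul mZ mW tr tl pl pr a
            (bMul mZ mW tr tl pl pr b c + bMul mZ mW tr tl pl pr c b)) ∧
      -- (x,u) ↦ x + u is bijective
      Function.Bijective (fun a : Z × W => (a.1 : E) + (a.2 : E)) ∧
      -- and a Zinbiel algebra homomorphism Z ⋈ W → E
      (∀ a b : Z × W,
        ((bMul mZ mW tr tl pl pr a b).1 : E) + ((bMul mZ mW tr tl pl pr a b).2 : E)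
          = mE ((a.1 : E) + (a.2 : E)) ((b.1 : E) + (b.2 : E))) := by
  constructor
  · intro h
    set pZ : E →ₗ[k] Z := Z.linearProjOfIsCompl W h with hpZ
    set pW : E →ₗ[k] W := W.linearProjOfIsCompl Z h.symm with hpW
    have hsum : ∀ e : E, (pZ e : E) + (pW e : E) = e := fun e =>
      Submodule.projection_add_projection_eq_self h e
    refine ⟨((mE ∘ₗ Z.subtype).compl₂ W.subtype).compr₂ pW,
      ((mE ∘ₗ W.subtype).compl₂ Z.subtype).compr₂ pW,
      ((mE ∘ₗ Z.subtype).compl₂ W.subtype).compr₂ pZ,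
      ((mE ∘ₗ W.subtype).compl₂ Z.subtype).compr₂ pZ, ?_, ?_, ?_⟩
    · -- Zinbiel on bicrossed product, via injective hom
      intro a b c
      have hbij : Function.Bijective (fun a : Z × W => (a.1 : E) + (a.2 : E)) := by
        have : (fun a : Z × W => (a.1 : E) + (a.2 : E)) =
            ⇑(Submodule.prodEquivOfIsCompl Z W h) := by
          funext x
          exact (Submodule.coe_prodEquivOfIsCompl' Z W h x).symm
        rw [this]; exact (Submodule.prodEquivOfIsCompl Z W h).bijective
      apply hbij.injective
      have hhom : ∀ a b : Z × W,
          (((bMul mZ mW (((mE ∘ₗ Z.subtype).compl₂ W.subtype).compr₂ pW)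
            (((mE ∘ₗ W.subtype).compl₂ Z.subtype).compr₂ pW)
            (((mE ∘ₗ Z.subtype).compl₂ W.subtype).compr₂ pZ)
            (((mE ∘ₗ W.subtype).compl₂ Z.subtype).compr₂ pZ) a b).1 : E)
            + ((bMul mZ mW (((mE ∘ₗ Z.subtype).compl₂ W.subtype).compr₂ pW)
            (((mE ∘ₗ W.subtype).compl₂ Z.subtype).compr₂ pW)
            (((mE ∘ₗ Z.subtype).compl₂ W.subtype).compr₂ pZ)
            (((mE ∘ₗ W.subtype).compl₂ Z.subtype).compr₂ pZ) a b).2 : E))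
            = mE ((a.1 : E) + (a.2 : E)) ((b.1 : E) + (b.2 : E)) := by
        intro a b
        simp only [bMul, LinearMap.compr₂_apply, LinearMap.compl₂_apply,
          LinearMap.comp_apply, Submodule.coe_subtype, Submodule.coe_add,
          map_add, LinearMap.add_apply]
        rw [hmZ, hmW]
        have h1 := hsum (mE (a.1 : E) (b.2 : E))
        have h2 := hsum (mE (a.2 : E) (b.1 : E))
        conv_rhs => rw [← h1, ← h2]
        abel
      simp only [hhom, Prod.fst_add, Prod.snd_add, Submodule.coe_add]
      rw [hE]
      congr 1
      rw [← hhom b c, ← hhom c b]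
      abel
    · -- bijective
      have : (fun a : Z × W => (a.1 : E) + (a.2 : E)) =
          ⇑(Submodule.prodEquivOfIsCompl Z W h) := by
        funext x
        exact (Submodule.coe_prodEquivOfIsCompl' Z W h x).symm
      rw [this]; exact (Submodule.prodEquivOfIsCompl Z W h).bijective
    · -- hom
      intro a b
      simp only [bMul, LinearMap.compr₂_apply, LinearMap.compl₂_apply,
        LinearMap.comp_apply, Submodule.coe_subtype, Submodule.coe_add,
        map_add, LinearMap.add_apply]
      rw [hmZ, hmW]
      have h1 := hsum (mE (a.1 : E) (b.2 : E))
      have h2 := hsum (mE (a.2 : E) (b.1 : E))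
      conv_rhs => rw [← h1, ← h2]
      abel
  · rintro ⟨tr, tl, pl, pr, -, hbij, -⟩
    constructor
    · rw [Submodule.disjoint_def]
      intro e heZ heW
      have := hbij.injective (a₁ := (⟨e, heZ⟩, -⟨e, heW⟩)) (a₂ := (0, 0)) (by simp)
      have h1 : (⟨e, heZ⟩ : Z) = 0 := (Prod.mk.injEq _ _ _ _ ▸ this).1
      exact congrArg Subtype.val h1
    · rw [codisjoint_iff_le_sup]
      intro e _
      obtain ⟨⟨x, u⟩, hxu⟩ := hbij.surjective e
      rw [← hxu]
      exact Submodule.add_mem_sup x.2 u.2
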